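/- Let E be a non-Archimedean local field with uniformizer ϖ_E, let v, c ∈ O_E^×, and set β_v = [[0, (vϖ_E)^{-1}],[1, 0]] and M(h) = [[0, 1],[h^{-1}, −h^{-1}·c·ϖ_E^{-1}]] for h ∈ E^×. Then for h ∈ E^× and k ∈ ℤ, the matrix M(h) belongs to the set N(2,E)·β_v^k·O_E^×·U¹ if and only if k = −2 and h ∈ −c²·ϖ_E^{-2}·(1+P_E). -/

import Mathlib

/-- The value group `ℤₘ₀ = ℤ ∪ {0}` of a normalized discrete valuation. -/
abbrev Zm0 : Type := WithZero (Multiplicative ℤ)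

/-- The element of `ℤₘ₀` corresponding to `n : ℤ`; an element `x` with
`Valued.v x = zofZ (-n)` has normalized additive valuation `val_E x = n`. -/
abbrev zofZ (n : ℤ) : Zm0 := ((Multiplicative.ofAdd n : Multiplicative ℤ) : Zm0)

/-- For `a = v·ϖ ≠ 0`, the matrix `β_v = [[0, a⁻¹], [1, 0]]` as an invertible
element of the ring of `2×2` matrices over `E` (i.e. an element of `GL(2,E)`),
so that integer powers `β_v^k` make sense. -/
def betaUnit {E : Type} [Field E] (a : E) (ha : a ≠ 0) : (Matrix (Fin 2) (Fin 2) E)ˣ :=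
  ⟨!![0, a⁻¹; 1, 0], !![0, 1; a, 0],
   by simp [Matrix.mul_fin_two, Matrix.one_fin_two, inv_mul_cancel₀ ha],
   by simp [Matrix.mul_fin_two, Matrix.one_fin_two, mul_inv_cancel₀ ha]⟩

/-!
Since `β_v² = (vϖ)⁻¹`, the power `β_v^k` is a scalar for even `k` and a scalar times `β_v` for
odd `k`, so a factorisation `M(h) = n β_v^k x z` reads `M(h) = s·n·z` or `M(h) = s·n·β_v·z` for
a scalar `s` with `val s = -⌊k/2⌋`, and only the bottom row and the determinant of `M(h)` matter.
For odd `k` the bottom row `(h⁻¹, -h⁻¹cϖ⁻¹)` would be `s` times the top row of `z ∈ U¹`, forcing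
`val z₀₁ = -1`. For even `k` it is `s` times the bottom row of `z`, and `-h⁻¹ = s² det z` with
`det z ∈ 1 + P_E`; comparing valuations gives `val s = 1`, i.e. `k = -2`, and eliminating `s`
gives `h = -c²ϖ⁻² · det z / z₁₁²`.
Conversely, for such `h` an explicit lower triangular `z` works with `k = -2`.
-/

lemma zofZ_eq_exp (n : ℤ) : zofZ n = WithZero.exp n := rfl

namespace Valuation

section Ring

variable {R Γ₀ : Type*} [Ring R] [LinearOrderedCommGroupWithZero Γ₀] (v : Valuation R Γ₀)
  {x y : R}

lemma map_eq_one_of_map_sub_one_lt (hx : v (x - 1) < 1) : v x = 1 :=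
  (v.map_eq_of_sub_lt (by rwa [v.map_one])).trans v.map_one

lemma map_mul_sub_one_lt (hx : v (x - 1) < 1) (hy : v (y - 1) < 1) : v (x * y - 1) < 1 := by
  rw [show x * y - 1 = x * (y - 1) + (x - 1) by noncomm_ring]
  refine v.map_add_lt ?_ hx
  rwa [map_mul, v.map_eq_one_of_map_sub_one_lt hx, one_mul]

end Ring

variable {K Γ₀ : Type*} [Field K] [LinearOrderedCommGroupWithZero Γ₀] (v : Valuation K Γ₀)
  {x y : K}

lemma map_div_sub_one_lt (hx : v (x - 1) < 1) (hy : v (y - 1) < 1) : v (x / y - 1) < 1 := by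
  have hy1 := v.map_eq_one_of_map_sub_one_lt hy
  have hy0 : y ≠ 0 := by rintro rfl; simp at hy1
  rw [show x / y - 1 = ((x - 1) - (y - 1)) / y by field_simp; ring, map_div₀, hy1, div_one]
  exact v.map_sub_lt hx hy

end Valuation

structure MemU1 {K Γ₀ : Type*} [Field K] [LinearOrderedCommGroupWithZero Γ₀]
    (v : Valuation K Γ₀) (z : Matrix (Fin 2) (Fin 2) K) : Prop where
  map_sub_one_lt_zero_zero : v (z 0 0 - 1) < 1
  map_lt_one_one_zero : v (z 1 0) < 1
  map_sub_one_lt_one_one : v (z 1 1 - 1) < 1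
  map_le_one_zero_one : v (z 0 1) ≤ 1

lemma MemU1.map_det_sub_one_lt {K Γ₀ : Type*} [Field K] [LinearOrderedCommGroupWithZero Γ₀]
    {v : Valuation K Γ₀} {z : Matrix (Fin 2) (Fin 2) K} (hz : MemU1 v z) :
    v (z.det - 1) < 1 := by
  rw [Matrix.det_fin_two, sub_right_comm]
  refine v.map_sub_lt
    (v.map_mul_sub_one_lt hz.map_sub_one_lt_zero_zero hz.map_sub_one_lt_one_one) ?_
  rw [map_mul]
  exact (mul_le_of_le_one_left' hz.map_le_one_zero_one).trans_lt hz.map_lt_one_one_zero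

section betaUnit

variable {K : Type} [Field K] (a : K) (ha : a ≠ 0)

lemma betaUnit_sq :
    betaUnit a ha ^ 2 =
      Units.map (Matrix.scalar (Fin 2) : K →+* _).toMonoidHom (Units.mk0 a ha)⁻¹ := by
  ext i j
  fin_cases i <;> fin_cases j <;> simp [betaUnit, sq]

lemma coe_betaUnit_zpow_two_mul (m : ℤ) :
    ((betaUnit a ha ^ (2 * m) : (Matrix (Fin 2) (Fin 2) K)ˣ) : Matrix (Fin 2) (Fin 2) K)
      = (a ^ m)⁻¹ • 1 := by
  rw [zpow_mul, zpow_two, ← pow_two, betaUnit_sq, ← map_zpow, Units.coe_map]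
  simp [Matrix.smul_one_eq_diagonal]

lemma coe_betaUnit_zpow_two_mul_add_one (m : ℤ) :
    ((betaUnit a ha ^ (2 * m + 1) : (Matrix (Fin 2) (Fin 2) K)ˣ) : Matrix (Fin 2) (Fin 2) K)
      = (a ^ m)⁻¹ • !![0, a⁻¹; 1, 0] := by
  rw [zpow_add_one, Units.val_mul, coe_betaUnit_zpow_two_mul, smul_one_mul]
  rfl

end betaUnit

section BottomRow

variable {K : Type*} [Field K] {u w s t b : K} {z : Matrix (Fin 2) (Fin 2) K}

lemma neg_eq_sq_mul_det_and_eq_mul_apply_one_one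
    (heq : !![0, 1; u, w] = s • (!![1, t; 0, 1] * z)) :
    -u = s ^ 2 * z.det ∧ w = s * z 1 1 := by
  constructor
  · have hdet := congrArg Matrix.det heq
    rw [Matrix.det_smul, Matrix.det_mul, Matrix.det_fin_two_of, Matrix.det_fin_two_of] at hdet
    simpa using hdet
  · simpa [Matrix.vecMul, dotProduct, Fin.sum_univ_two] using congrFun₂ heq 1 1

lemma eq_mul_apply_zero_zero_and_eq_mul_apply_zero_one
    (heq : !![0, 1; u, w] = s • (!![1, t; 0, 1] * !![0, b; 1, 0] * z)) :
    u = s * z 0 0 ∧ w = s * z 0 1 :=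
  ⟨by simpa [Matrix.vecMul, dotProduct, Fin.sum_univ_two] using congrFun₂ heq 1 0,
    by simpa [Matrix.vecMul, dotProduct, Fin.sum_univ_two] using congrFun₂ heq 1 1⟩

variable {v : Valuation K Zm0} {ϖ c : K}

lemma map_eq_and_exists_inv_eq_of_bottom_row_eq_smul_row_one (hϖ : v ϖ = zofZ (-1))
    (hc : v c = 1) (hz : MemU1 v z) (hs : s ≠ 0) (hdet : -u = s ^ 2 * z.det)
    (h11 : -u * c * ϖ⁻¹ = s * z 1 1) :
    v s = zofZ (-1) ∧ ∃ p, v p < 1 ∧ u⁻¹ = -c ^ 2 * (ϖ ^ 2)⁻¹ * (1 + p) := by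
  have hz11 := v.map_eq_one_of_map_sub_one_lt hz.map_sub_one_lt_one_one
  have hdet1 := v.map_eq_one_of_map_sub_one_lt hz.map_det_sub_one_lt
  have hϖ0 : ϖ ≠ 0 := by rintro rfl; simp at hϖ
  have hz110 : z 1 1 ≠ 0 := by rintro h; simp [h] at hz11
  have hdet0 : z.det ≠ 0 := by rintro h; simp [h] at hdet1
  have hu0 : u ≠ 0 := by rintro rfl; simp [hs, hdet0] at hdet
  have h11' : -u * c = s * z 1 1 * ϖ := by
    rw [← h11]
    field_simp
  have hz11_sq : ϖ ^ 2 * z 1 1 ^ 2 = -u * c ^ 2 * z.det := by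
    apply mul_left_cancel₀ hu0
    linear_combination (-(ϖ ^ 2 * z 1 1 ^ 2)) * hdet + z.det * (-u * c + s * z 1 1 * ϖ) * h11'
  have hu : u⁻¹ = -c ^ 2 * (ϖ ^ 2)⁻¹ * (z.det / z 1 1 ^ 2) := by
    field_simp
    linear_combination hz11_sq
  have hvu : v u = v s ^ 2 := by simpa [hdet1] using congrArg v hdet
  have hvs : v u * WithZero.exp 1 = v s := by
    simpa [hc, hϖ, hz11, zofZ_eq_exp] using congrArg v h11
  refine ⟨?_, z.det / z 1 1 ^ 2 - 1, ?_, by rw [hu, add_sub_cancel]⟩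
  · have : v s * WithZero.exp 1 = 1 :=
      mul_left_cancel₀ (v.ne_zero_iff.mpr hs) (by rw [← mul_assoc, ← sq, ← hvu, hvs, mul_one])
    exact eq_inv_of_mul_eq_one_left this
  · exact v.map_div_sub_one_lt hz.map_det_sub_one_lt
      (sq (z 1 1) ▸ v.map_mul_sub_one_lt hz.map_sub_one_lt_one_one hz.map_sub_one_lt_one_one)

lemma false_of_bottom_row_eq_smul_row_zero (hϖ : v ϖ = zofZ (-1)) (hc : v c = 1)
    (hz : MemU1 v z) (hs : s ≠ 0) (h10 : u = s * z 0 0) (h11 : -u * c * ϖ⁻¹ = s * z 0 1) :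
    False := by
  have h01 : z 0 1 = -(c * ϖ⁻¹ * z 0 0) := by
    apply mul_left_cancel₀ hs
    rw [← h11, h10]
    ring
  have hv01 : v (z 0 1) = WithZero.exp 1 := by
    rw [h01, Valuation.map_neg, map_mul, map_mul, map_inv₀, hc, hϖ,
      v.map_eq_one_of_map_sub_one_lt hz.map_sub_one_lt_zero_zero, zofZ_eq_exp, one_mul, mul_one,
      ← WithZero.exp_neg, neg_neg]
  have := hz.map_le_one_zero_one
  rw [hv01, ← WithZero.exp_zero, WithZero.exp_le_exp] at this
  omega

end BottomRow

lemma exists_eq_unipotent_mul_betaUnit_zpow_neg_two {K : Type} [Field K] {v : Valuation K Zm0}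
    {ϖ c p a : K} (hϖ : v ϖ = zofZ (-1)) (hc : v c = 1) (hp : v p < 1) (ha : a ≠ 0)
    (hva : v a = v ϖ) :
    ∃ t x : K, ∃ z : Matrix (Fin 2) (Fin 2) K, v x = 1 ∧ MemU1 v z ∧
      !![(0 : K), 1; (-c ^ 2 * (ϖ ^ 2)⁻¹ * (1 + p))⁻¹,
          -(-c ^ 2 * (ϖ ^ 2)⁻¹ * (1 + p))⁻¹ * c * ϖ⁻¹]
        = !![(1 : K), t; 0, 1]
          * ((betaUnit a ha ^ (-2 : ℤ) : (Matrix (Fin 2) (Fin 2) K)ˣ) : Matrix (Fin 2) (Fin 2) K)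
          * (x • (1 : Matrix (Fin 2) (Fin 2) K)) * z := by
  have hϖ0 : ϖ ≠ 0 := by rintro rfl; simp at hϖ
  have hc0 : c ≠ 0 := by rintro rfl; simp at hc
  have hp1 : v (1 + p) = 1 := v.map_one_add_of_lt hp
  have hp0 : 1 + p ≠ 0 := by rintro h; simp [h] at hp1
  refine ⟨c * (1 + p) * ϖ⁻¹, ϖ * (a * c)⁻¹, !![1, 0; -ϖ * (c * (1 + p))⁻¹, (1 + p)⁻¹],
    by simp [hva, hc, hϖ0], ⟨by simp, ?_, ?_, by simp⟩, ?_⟩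
  · simp only [Matrix.of_apply, Matrix.cons_val', Matrix.cons_val_zero, Matrix.cons_val_one,
      Matrix.empty_val', Matrix.cons_val_fin_one]
    rw [map_mul, Valuation.map_neg, map_inv₀, map_mul, hϖ, hc, hp1, zofZ_eq_exp, one_mul, inv_one,
      mul_one, ← WithZero.exp_zero, WithZero.exp_lt_exp]
    norm_num
  · simpa using v.map_div_sub_one_lt (x := 1) (by simp) (by simpa using hp)
  · rw [show (-2 : ℤ) = 2 * (-1) by norm_num, coe_betaUnit_zpow_two_mul]
    ext i j
    fin_cases i <;> fin_cases j <;> simp [Matrix.mul_apply, Fin.sum_univ_two] <;> field_simp; ring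

/-- Let `E` be a non-Archimedean local field with uniformizer `ϖ`, let
`v, c ∈ O_E^×`, `β_v = [[0,(vϖ)⁻¹],[1,0]]`, and `M(h) = [[0,1],[h⁻¹, −h⁻¹·c·ϖ⁻¹]]`
for `h ∈ E^×`.  Then for `h ∈ E^×` and `k ∈ ℤ`, one has
`M(h) ∈ N(2,E)·β_v^k·O_E^×·U¹` if and only if `k = −2` and
`h ∈ −c²·ϖ⁻²·(1+P_E)`. -/
theorem statement8
    (E : Type) [Field E] [Valued E Zm0]
    (ϖ v c : E)
    (hϖ : Valued.v ϖ = zofZ (-1))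
    (hv : Valued.v v = (1 : Zm0))
    (hc : Valued.v c = (1 : Zm0))
    (h : E) (k : ℤ) :
    (∃ t x : E, ∃ z : Matrix (Fin 2) (Fin 2) E,
        Valued.v x = (1 : Zm0) ∧
        Valued.v (z 0 0 - 1) < (1 : Zm0) ∧
        Valued.v (z 1 0) < (1 : Zm0) ∧
        Valued.v (z 1 1 - 1) < (1 : Zm0) ∧
        Valued.v (z 0 1) ≤ (1 : Zm0) ∧
        !![(0 : E), 1; h⁻¹, -h⁻¹ * c * ϖ⁻¹]
          = !![(1 : E), t; 0, 1]
            * ((betaUnit (v * ϖ)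
                  (mul_ne_zero (fun h0 => by simp [h0] at hv)
                    (fun h0 => by simp [h0] at hϖ)) ^ k : (Matrix (Fin 2) (Fin 2) E)ˣ)
                : Matrix (Fin 2) (Fin 2) E)
            * (x • (1 : Matrix (Fin 2) (Fin 2) E)) * z)
    ↔ (k = -2 ∧ ∃ p : E, Valued.v p < (1 : Zm0) ∧ h = -c ^ 2 * (ϖ ^ 2)⁻¹ * (1 + p)) := by
  have hva : Valued.v (v * ϖ) = Valued.v ϖ := by rw [map_mul, hv, one_mul]
  constructor
  · rintro ⟨t, x, z, hx, hz00, hz10, hz11, hz01, heq⟩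
    have hz : MemU1 Valued.v z := ⟨hz00, hz10, hz11, hz01⟩
    have hvs (m : ℤ) : Valued.v (x * ((v * ϖ) ^ m)⁻¹) = WithZero.exp m := by
      simp [hva, hϖ, hx, zofZ_eq_exp, ← WithZero.exp_zsmul]
    have hs (m : ℤ) : x * ((v * ϖ) ^ m)⁻¹ ≠ 0 :=
      Valued.v.ne_zero_iff.mp (by simp [hvs])
    obtain ⟨m, rfl | rfl⟩ := Int.even_or_odd' k
    · rw [coe_betaUnit_zpow_two_mul] at heq
      simp only [Matrix.mul_smul, Matrix.smul_mul, mul_one, smul_smul] at heq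
      obtain ⟨hdet, h11⟩ := neg_eq_sq_mul_det_and_eq_mul_apply_one_one heq
      obtain ⟨hm, p, hp, hh⟩ :=
        map_eq_and_exists_inv_eq_of_bottom_row_eq_smul_row_one hϖ hc hz (hs m) hdet h11
      rw [hvs, zofZ_eq_exp, WithZero.exp_inj] at hm
      exact ⟨by omega, p, hp, by rwa [inv_inv] at hh⟩
    · rw [coe_betaUnit_zpow_two_mul_add_one] at heq
      simp only [Matrix.mul_smul, Matrix.smul_mul, mul_one, smul_smul] at heq
      obtain ⟨h10, h11⟩ := eq_mul_apply_zero_zero_and_eq_mul_apply_zero_one heq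
      exact (false_of_bottom_row_eq_smul_row_zero hϖ hc hz (hs m) h10 h11).elim
  · rintro ⟨rfl, p, hp, rfl⟩
    obtain ⟨t, x, z, hx, ⟨hz00, hz10, hz11, hz01⟩, heq⟩ :=
      exists_eq_unipotent_mul_betaUnit_zpow_neg_two hϖ hc hp _ hva
    exact ⟨t, x, z, hx, hz00, hz10, hz11, hz01, heq⟩
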